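/- Suppose (p₁, q₁) : ℝ → ℂ² satisfies q₁' = p₁ and p₁' = 2q₁³ + t q₁ + g²/(4q₁³), with q₁(t) ≠ 0 for all t, where g ∈ ℂ is a constant. Define Q = −2^{-1/3}(p₁/q₁ − i g/(2q₁²)), P = 2^{1/3} q₁² − Q² − s/2, with s = −2^{1/3} t. Then dQ/ds = P and dP/ds = 2Q³ + sQ − i g − 1/2. -/

import Mathlib

/-!
The variable `w = p/q - i g/(2 q²)` satisfies the Riccati equation `w' = 2 q² + t - w²`: the
`g²/(4 q³)` term of the force cancels against the square of the `i g/(2 q²)` correction.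
Since `Q` is `w` rescaled by `2^{1/3}` in both the variable and the value, `c13³ = 2` turns this
into `Q' = P`. Differentiating `P` and using `q² w = q p - i g/2` then yields Painlevé II.
-/

/-- The cube root of 2. -/
noncomputable def c13 : ℝ := (2 : ℝ) ^ ((1 : ℝ) / 3)

/-- `Q = -2^{-1/3}(p₁/q₁ - i g/(2 q₁²))` at `t = -s/2^{1/3}`. -/
noncomputable def cpQ (g : ℂ) (p q : ℝ → ℂ) (s : ℝ) : ℂ :=
  -(c13 : ℂ)⁻¹ * (p (-s / c13) / q (-s / c13)
    - Complex.I * g / (2 * q (-s / c13) ^ 2))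

/-- `P = 2^{1/3} q₁² - Q² - s/2`. -/
noncomputable def cpP (g : ℂ) (p q : ℝ → ℂ) (s : ℝ) : ℂ :=
  (c13 : ℂ) * q (-s / c13) ^ 2 - (cpQ g p q s) ^ 2 - (s : ℂ) / 2

open Complex

lemma c13_cube : (c13 : ℂ) ^ 3 = 2 := by
  have h : c13 ^ 3 = 2 := by
    rw [c13, ← Real.rpow_natCast, ← Real.rpow_mul zero_le_two]
    norm_num
  exact_mod_cast h

lemma c13_ne_zero : (c13 : ℂ) ≠ 0 := by
  have : c13 ≠ 0 := (Real.rpow_pos_of_pos two_pos _).ne'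
  exact_mod_cast this

noncomputable def riccatiVar (g : ℂ) (p q : ℝ → ℂ) (t : ℝ) : ℂ :=
  p t / q t - I * g / (2 * q t ^ 2)

lemma riccatiVar_mul_sq {g : ℂ} {p q : ℝ → ℂ} {t : ℝ} (hne : q t ≠ 0) :
    q t ^ 2 * riccatiVar g p q t = q t * p t - I * g / 2 := by
  rw [riccatiVar]
  field_simp

lemma hasDerivAt_riccatiVar {g : ℂ} {p q : ℝ → ℂ} {t : ℝ}
    (hq : HasDerivAt q (p t) t)
    (hp : HasDerivAt p (2 * q t ^ 3 + (t : ℂ) * q t + g ^ 2 / (4 * q t ^ 3)) t)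
    (hne : q t ≠ 0) :
    HasDerivAt (riccatiVar g p q) (2 * q t ^ 2 + t - riccatiVar g p q t ^ 2) t := by
  have hsq : HasDerivAt (fun t => 2 * q t ^ 2) (2 * (2 * q t * p t)) t := by
    simpa using (hq.pow 2).const_mul 2
  have h := (hp.div hq hne).sub ((hasDerivAt_const t (I * g)).div hsq (by simpa using hne))
  refine h.congr_deriv ?_
  rw [riccatiVar]
  field_simp
  linear_combination 4 * g ^ 2 * I_sq

lemma HasDerivAt.comp_neg_div {f : ℝ → ℂ} {f' : ℂ} {c s : ℝ}
    (hf : HasDerivAt f f' (-s / c)) :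
    HasDerivAt (fun s => f (-s / c)) (-(c : ℂ)⁻¹ * f') s := by
  have h := hf.scomp s ((hasDerivAt_neg s).div_const c)
  simpa [Function.comp_def, Complex.real_smul, neg_div] using h

lemma cpQ_eq (g : ℂ) (p q : ℝ → ℂ) (s : ℝ) :
    cpQ g p q s = -(c13 : ℂ)⁻¹ * riccatiVar g p q (-s / c13) := rfl

lemma hasDerivAt_cpQ {g : ℂ} {p q : ℝ → ℂ} {s : ℝ}
    (hq : HasDerivAt q (p (-s / c13)) (-s / c13))
    (hp : HasDerivAt p (2 * q (-s / c13) ^ 3 + ((-s / c13 : ℝ) : ℂ) * q (-s / c13)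
      + g ^ 2 / (4 * q (-s / c13) ^ 3)) (-s / c13))
    (hne : q (-s / c13) ≠ 0) :
    HasDerivAt (cpQ g p q) (cpP g p q s) s := by
  have h := (hasDerivAt_riccatiVar hq hp hne).comp_neg_div.const_mul (-(c13 : ℂ)⁻¹)
  refine h.congr_deriv ?_
  rw [cpP, cpQ_eq]
  generalize q (-s / c13) = u, riccatiVar g p q (-s / c13) = w
  have hc := c13_ne_zero
  push_cast
  field_simp
  linear_combination (s - 2 * c13 * u ^ 2) * c13_cube

lemma hasDerivAt_cpP {g : ℂ} {p q : ℝ → ℂ} {s : ℝ}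
    (hq : HasDerivAt q (p (-s / c13)) (-s / c13)) (hne : q (-s / c13) ≠ 0)
    (hQ : HasDerivAt (cpQ g p q) (cpP g p q s) s) :
    HasDerivAt (cpP g p q)
      (2 * cpQ g p q s ^ 3 + s * cpQ g p q s - I * g - 1 / 2) s := by
  have hs : HasDerivAt (fun s : ℝ => (s : ℂ) / 2) (1 / 2) s := by
    simpa using ofRealCLM.hasDerivAt.div_const 2
  have h := ((hq.comp_neg_div.pow 2).const_mul (c13 : ℂ)).sub (hQ.pow 2) |>.sub hs
  refine h.congr_deriv ?_
  have key := riccatiVar_mul_sq (g := g) (p := p) hne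
  rw [cpP, cpQ_eq]
  generalize q (-s / c13) = u, p (-s / c13) = v, riccatiVar g p q (-s / c13) = w at key ⊢
  have hc : (c13 : ℂ) * (c13 : ℂ)⁻¹ = 1 := mul_inv_cancel₀ c13_ne_zero
  linear_combination 2 * key + (2 * u ^ 2 * w - 2 * u * v) * hc

/-- g-deformed folding of two-particle Calogero–Painlevé II on its invariant subset:
the reduced variables solve Painlevé II with parameter `-1/2 - i g`. -/
theorem calogero_painleveII_folding (g : ℂ) (p q : ℝ → ℂ)
    (hq : ∀ t : ℝ, HasDerivAt q (p t) t)
    (hp : ∀ t : ℝ, HasDerivAt p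
      (2 * q t ^ 3 + (t : ℂ) * q t + g ^ 2 / (4 * q t ^ 3)) t)
    (hne : ∀ t : ℝ, q t ≠ 0) :
    ∀ s : ℝ,
      HasDerivAt (cpQ g p q) (cpP g p q s) s ∧
      HasDerivAt (cpP g p q)
        (2 * (cpQ g p q s) ^ 3 + (s : ℂ) * cpQ g p q s - Complex.I * g - 1 / 2) s := by
  intro s
  have hQ := hasDerivAt_cpQ (s := s) (hq _) (hp _) (hne _)
  exact ⟨hQ, hasDerivAt_cpP (hq _) (hne _) hQ⟩
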